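/- arXiv:2508.21185 — 4 statements merged into one kernel-verified Lean document; each statement's English description precedes it below -/
import Mathlib

section
/- The edge-distinguishing chromatic number of the complete graph K_n for n ≥ 3 equals n; that is, K_n admits an edge-distinguishing n-coloring but no edge-distinguishing (n-1)-coloring. -/
/-- A `k`-coloring `c` of the vertices of `G` is *edge-distinguishing* if the induced
edge coloring, sending each edge `{u,v}` to the unordered pair `{c u, c v}`, is
injective on the edge set. -/
def edgeDist {V : Type*} (G : SimpleGraph V) {k : ℕ} (c : V → Fin k) : Prop :=
  Set.InjOn (Sym2.map c) G.edgeSet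

/-! An injective coloring separates all pairs, so `n` colors suffice. Conversely, if two distinct
vertices `u, v` of `K_n` share a color, then for any third vertex `w` the edges `uw` and `vw`
receive the same pair of colors; hence for `n ≥ 3` an edge-distinguishing coloring of `K_n` is
injective and needs at least `n` colors. -/

theorem edgeDist_of_injective {V : Type*} (G : SimpleGraph V) {k : ℕ} {c : V → Fin k}
    (hc : Function.Injective c) : edgeDist G c :=
  (Sym2.map.injective hc).injOn

theorem edgeDist.eq_of_adj_of_adj {V : Type*} {G : SimpleGraph V} {k : ℕ} {c : V → Fin k}
    (hc : edgeDist G c) {u v w : V} (hu : G.Adj u w) (hv : G.Adj v w) (huv : c u = c v) :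
    u = v :=
  Sym2.congr_left.mp <| hc hu hv (by simp [huv])

theorem edgeDist.injective_of_top {V : Type*} [Fintype V] {k : ℕ} {c : V → Fin k}
    (hV : 3 ≤ Fintype.card V) (hc : edgeDist (⊤ : SimpleGraph V) c) : Function.Injective c := by
  classical
  intro u v huv
  obtain ⟨w, -, hw⟩ := Finset.exists_mem_notMem_of_card_lt_card
    (s := {u, v}) (t := Finset.univ) (Finset.card_le_two.trans_lt hV)
  simp only [Finset.mem_insert, Finset.mem_singleton, not_or] at hw
  exact hc.eq_of_adj_of_adj (Ne.symm hw.1) (Ne.symm hw.2) huv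

theorem stmt_1 (n : ℕ) (hn : 3 ≤ n) :
    (∃ c : Fin n → Fin n, edgeDist (⊤ : SimpleGraph (Fin n)) c) ∧
    ¬ (∃ c : Fin n → Fin (n - 1), edgeDist (⊤ : SimpleGraph (Fin n)) c) := by
  refine ⟨⟨id, edgeDist_of_injective _ Function.injective_id⟩, fun ⟨c, hc⟩ => ?_⟩
  have hcard := Fintype.card_le_of_injective c (hc.injective_of_top (by simpa using hn))
  simp only [Fintype.card_fin] at hcard
  omega
end

section
/- In any edge-distinguishing coloring of the complete bipartite graph K_{n,m} (with n, m ≥ 1 and n + m ≥ 3), at most two vertices receive the same color, and if two vertices share a color they lie in different parts of the bipartition. -/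
/-- The complete bipartite graph `K_{n,m}` with parts `Fin n` (left) and `Fin m` (right). -/
def bipG (n m : ℕ) : SimpleGraph (Fin n ⊕ Fin m) :=
  SimpleGraph.fromRel (fun u v => ∃ a b, u = Sum.inl a ∧ v = Sum.inr b)

/-!
Two neighbours `u, v` of a common vertex `w` with `c u = c v` give edges `{w, u}` and `{w, v}` of
the same colour, so `u = v`: an edge-distinguishing colouring is injective on every neighbourhood.
In `K_{n,m}` each part is the neighbourhood of any vertex of the other part, so vertices of equal
colour lie in different parts, and by pigeonhole no three vertices share a colour.
-/

open Function

lemma edgeDist.injOn_neighborSet {V : Type*} {G : SimpleGraph V} {k : ℕ} {c : V → Fin k}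
    (hc : edgeDist G c) (w : V) : Set.InjOn c (G.neighborSet w) := by
  intro u hu v hv huv
  have hedge : Sym2.map c s(w, u) = Sym2.map c s(w, v) := by simp [huv]
  exact Sym2.congr_right.mp (hc hu hv hedge)

lemma bipG_adj_inl_inr {n m : ℕ} (a : Fin n) (b : Fin m) :
    (bipG n m).Adj (Sum.inl a) (Sum.inr b) := by
  simp [bipG]

lemma edgeDist.injective_comp_inl {n m k : ℕ} {c : Fin n ⊕ Fin m → Fin k}
    (hc : edgeDist (bipG n m) c) (b : Fin m) : Injective (c ∘ Sum.inl) := fun a a' h =>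
  Sum.inl_injective <| hc.injOn_neighborSet (Sum.inr b)
    ((bipG_adj_inl_inr a b).symm) ((bipG_adj_inl_inr a' b).symm) h

lemma edgeDist.injective_comp_inr {n m k : ℕ} {c : Fin n ⊕ Fin m → Fin k}
    (hc : edgeDist (bipG n m) c) (a : Fin n) : Injective (c ∘ Sum.inr) := fun b b' h =>
  Sum.inr_injective <| hc.injOn_neighborSet (Sum.inl a)
    (bipG_adj_inl_inr a b) (bipG_adj_inl_inr a b') h

lemma Sum.isLeft_ne_of_apply_eq {α β γ : Type*} {f : α ⊕ β → γ}
    (hl : Injective (f ∘ Sum.inl)) (hr : Injective (f ∘ Sum.inr)) {u v : α ⊕ β}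
    (huv : u ≠ v) (h : f u = f v) : u.isLeft ≠ v.isLeft := by
  intro hside
  rcases u with a | b <;> rcases v with a' | b' <;>
    simp only [Sum.isLeft_inl, Sum.isLeft_inr, Bool.true_eq_false, Bool.false_eq_true] at hside
  · exact huv (congrArg Sum.inl (hl h))
  · exact huv (congrArg Sum.inr (hr h))

theorem stmt_3_general (n m : ℕ) (hn : 1 ≤ n) (hm : 1 ≤ m) {k : ℕ}
    (c : Fin n ⊕ Fin m → Fin k) (hc : edgeDist (bipG n m) c) :
    (∀ u v w : Fin n ⊕ Fin m, u ≠ v → v ≠ w → u ≠ w →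
      ¬ (c u = c v ∧ c v = c w)) ∧
    (∀ u v : Fin n, u ≠ v → c (Sum.inl u) ≠ c (Sum.inl v)) ∧
    (∀ u v : Fin m, u ≠ v → c (Sum.inr u) ≠ c (Sum.inr v)) := by
  have hl := hc.injective_comp_inl ⟨0, hm⟩
  have hr := hc.injective_comp_inr ⟨0, hn⟩
  refine ⟨?_, fun u v huv h => huv (hl h), fun u v huv h => huv (hr h)⟩
  rintro u v w huv hvw huw ⟨h₁, h₂⟩
  have huv' := Sum.isLeft_ne_of_apply_eq hl hr huv h₁
  have hvw' := Sum.isLeft_ne_of_apply_eq hl hr hvw h₂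
  have huw' := Sum.isLeft_ne_of_apply_eq hl hr huw (h₁.trans h₂)
  grind

theorem stmt_3 (n m : ℕ) (hn : 1 ≤ n) (hm : 1 ≤ m) (hnm : 3 ≤ n + m) {k : ℕ}
    (c : Fin n ⊕ Fin m → Fin k) (hc : edgeDist (bipG n m) c) :
    (∀ u v w : Fin n ⊕ Fin m, u ≠ v → v ≠ w → u ≠ w →
      ¬ (c u = c v ∧ c v = c w)) ∧
    (∀ u v : Fin n, u ≠ v → c (Sum.inl u) ≠ c (Sum.inl v)) ∧
    (∀ u v : Fin m, u ≠ v → c (Sum.inr u) ≠ c (Sum.inr v)) :=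
  stmt_3_general n m hn hm c hc
end

section
/- The cycle C_7 admits no edge-distinguishing 3-coloring but admits an edge-distinguishing 4-coloring; hence λ(C_7) = 4. -/
/-- The cycle graph on `m` vertices, with vertex set `ZMod m` and edges `{i, i+1}`. -/
def cycleG (m : ℕ) : SimpleGraph (ZMod m) :=
  SimpleGraph.fromRel (fun u v => v = u + 1)

open Finset

section EdgeDist

variable {V : Type*} {G : SimpleGraph V} {k l : ℕ} {c : V → Fin k}

instance edgeDist.decidable [Fintype V] [DecidableEq V] [DecidableRel G.Adj] :
    Decidable (edgeDist G c) :=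
  decidable_of_iff (Set.InjOn (Sym2.map c) (G.edgeFinset : Set (Sym2 V)))
    (by rw [SimpleGraph.coe_edgeFinset]; rfl)

theorem edgeDist.castLE (h : k ≤ l) (hc : edgeDist G c) : edgeDist G (Fin.castLE h ∘ c) :=
  fun _ ha _ hb heq => hc ha hb <| Sym2.map.injective (Fin.castLE_injective h) <| by
    simpa only [Sym2.map_map] using heq

theorem edgeDist.card_edgeFinset_le [Fintype G.edgeSet] (hc : edgeDist G c) :
    #G.edgeFinset ≤ (k + 1).choose 2 := by
  simpa only [card_univ, Sym2.card, Fintype.card_fin] using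
    card_le_card_of_injOn (Sym2.map c) (fun _ _ => mem_univ _)
      (fun a ha b hb => hc (G.mem_edgeFinset.mp ha) (G.mem_edgeFinset.mp hb))

end EdgeDist

instance cycleG.decidableRelAdj (m : ℕ) : DecidableRel (cycleG m).Adj := fun u v =>
  inferInstanceAs (Decidable (u ≠ v ∧ (v = u + 1 ∨ u = v + 1)))

theorem cycleG_seven_card_edgeFinset : #(cycleG 7).edgeFinset = 7 := by decide

theorem not_exists_edgeDist_cycleG_seven_fin_three :
    ¬ ∃ c : ZMod 7 → Fin 3, edgeDist (cycleG 7) c := fun ⟨_, hc⟩ => by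
  have := hc.card_edgeFinset_le
  rw [cycleG_seven_card_edgeFinset] at this
  exact absurd this (by decide)

theorem edgeDist_cycleG_seven_fin_four :
    edgeDist (cycleG 7) (fun x : ZMod 7 => ![(0 : Fin 4), 0, 1, 1, 2, 2, 3] x) := by decide

theorem stmt_9 :
    ¬ (∃ c : ZMod 7 → Fin 3, edgeDist (cycleG 7) c) ∧
    (∃ c : ZMod 7 → Fin 4, edgeDist (cycleG 7) c) ∧
    IsLeast {k : ℕ | ∃ c : ZMod 7 → Fin k, edgeDist (cycleG 7) c} 4 := by
  have exists_four : ∃ c : ZMod 7 → Fin 4, edgeDist (cycleG 7) c :=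
    ⟨_, edgeDist_cycleG_seven_fin_four⟩
  refine ⟨not_exists_edgeDist_cycleG_seven_fin_three, exists_four, exists_four, ?_⟩
  rintro k ⟨c, hc⟩
  by_contra! hk
  exact not_exists_edgeDist_cycleG_seven_fin_three ⟨_, hc.castLE (by omega : k ≤ 3)⟩
end

section
/- In the EDGe game on the complete graph K_n with n ≥ 3 played with n colors, Player 2 has a winning strategy: after Player 1 colors any vertex with color a, Player 2 can color a second vertex with the same color a, after which no uncolored vertex can be legally colored, so the game ends with Player 2 having made the last move. -/
/-- A partial coloring (`none` = uncolored) is edge-distinguishing if the induced edge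
coloring is injective on the edges whose two endpoints are both colored. -/
def pEdgeDist {V : Type*} (G : SimpleGraph V) {k : ℕ} (c : V → Option (Fin k)) : Prop :=
  Set.InjOn (Sym2.map c) {e ∈ G.edgeSet | ∀ v ∈ e, (c v).isSome = true}

theorem not_pEdgeDist_of_adj_of_eq {V : Type*} {G : SimpleGraph V} {k : ℕ}
    {c : V → Option (Fin k)} {u v w : V} (huv : u ≠ v) (hwu : G.Adj w u) (hwv : G.Adj w v)
    (hcuv : c u = c v) (hu : (c u).isSome = true) (hw : (c w).isSome = true) :
    ¬ pEdgeDist G c := by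
  intro hc
  have hv : (c v).isSome = true := hcuv ▸ hu
  have hmem {x : V} (hwx : G.Adj w x) (hx : (c x).isSome = true) :
      s(w, x) ∈ {e ∈ G.edgeSet | ∀ y ∈ e, (c y).isSome = true} := by
    refine ⟨hwx, fun y hy => ?_⟩
    rcases Sym2.mem_iff.mp hy with rfl | rfl <;> assumption
  have hsame : Sym2.map c s(w, u) = Sym2.map c s(w, v) := by
    simp only [Sym2.map_mk, hcuv]
  exact huv (Sym2.congr_right.mp (hc (hmem hwu hu) (hmem hwv hv) hsame))

theorem stmt_10_general (n : ℕ) (u v w : Fin n) (huv : u ≠ v) (hwu : w ≠ u)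
    (hwv : w ≠ v) (a b : Fin n) :
    ¬ pEdgeDist (⊤ : SimpleGraph (Fin n))
      (fun x => if x = u then some a else if x = v then some a else
        if x = w then some b else none) := by
  apply not_pEdgeDist_of_adj_of_eq (u := u) (v := v) (w := w) huv
    ((SimpleGraph.top_adj w u).mpr hwu) ((SimpleGraph.top_adj w v).mpr hwv) <;>
    simp [hwu, hwv]

theorem stmt_10 (n : ℕ) (hn : 3 ≤ n) (u v w : Fin n) (huv : u ≠ v) (hwu : w ≠ u)
    (hwv : w ≠ v) (a b : Fin n) :
    ¬ pEdgeDist (⊤ : SimpleGraph (Fin n))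
      (fun x => if x = u then some a else if x = v then some a else
        if x = w then some b else none) :=
  stmt_10_general n u v w huv hwu hwv a b
end
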